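/- arXiv:math/9801125 — 2 statements merged into one kernel-verified Lean document; each statement's English description precedes it below -/
import Mathlib

section
/- If m ≥ 2 is a natural number that is not a power of the prime p, then there exist positive integers i, j with i + j = m such that the binomial coefficient C(m, i) is not divisible by p. -/
theorem exists_choose_not_dvd_of_not_prime_pow (p m : ℕ) (hp : p.Prime) (hm : 2 ≤ m)
    (h : ∀ k : ℕ, m ≠ p ^ k) :
    ∃ i j : ℕ, 0 < i ∧ 0 < j ∧ i + j = m ∧ ¬ p ∣ m.choose i := by
  have : Fact p.Prime := ⟨hp⟩
  induction m using Nat.strong_induction_on with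
  | _ m ih =>
  by_cases hpm : p ∣ m
  · obtain ⟨m', rfl⟩ := hpm
    have hp2 : 2 ≤ p := hp.two_le
    have hm' : 2 ≤ m' := by
      rcases Nat.lt_or_ge m' 2 with h1 | h1
      · interval_cases m'
        · simp at hm
        · exact absurd (h 1) (by simp)
      · exact h1
    have hlt : m' < p * m' := by
      nlinarith
    have h' : ∀ k : ℕ, m' ≠ p ^ k := by
      intro k hk
      exact h (k + 1) (by rw [hk, pow_succ, mul_comm])
    obtain ⟨i, j, hi, hj, hij, hdvd⟩ := ih m' hlt hm' h'
    refine ⟨p * i, p * j, by positivity, by positivity, by rw [← Nat.mul_add, hij], ?_⟩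
    have key := Choose.choose_modEq_choose_mod_mul_choose_div_nat (n := p * m')
      (k := p * i) (p := p)
    have hpp : 0 < p := hp.pos
    rw [Nat.mul_mod_right, Nat.mul_mod_right, Nat.mul_div_cancel_left _ hpp,
      Nat.mul_div_cancel_left _ hpp] at key
    simp only [Nat.choose_zero_right, one_mul] at key
    intro hdvd'
    apply hdvd
    have : (p * m').choose (p * i) % p = m'.choose i % p := key
    rw [Nat.dvd_iff_mod_eq_zero] at hdvd' ⊢
    omega
  · exact ⟨1, m - 1, one_pos, by omega, by omega, by simpa [Nat.choose_one_right] using hpm⟩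
end

section
/- Let p be a prime, k ≥ 1, and let i be an integer with 0 < i < p^k. Write i = p^{k-1} r + s with 0 ≤ s < p^{k-1}. Then v_p((p^{k-1}!)^{p-1} · s! · (p^{k-1} - s)!) = v_p(i! · (p^k - i)!). -/
private lemma term_eq_aux (p r s m t : ℕ) (ht : 0 < t) (hr : r < p) (hs : s ≤ t * m) :
    (p - 1) * (t * m / t) + s / t + (t * m - s) / t
      = (t * (m * r) + s) / t + (p * (t * m) - (t * (m * r) + s)) / t := by
  obtain ⟨c, hc⟩ : ∃ c, p = r + c + 1 := ⟨p - r - 1, by omega⟩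
  have hN : p * (t * m) - (t * (m * r) + s) = t * (m * c) + (t * m - s) := by
    have h1 : p * (t * m) = t * (m * r) + t * (m * c) + t * m := by rw [hc]; ring
    omega
  rw [hN, Nat.mul_add_div ht, Nat.mul_add_div ht, Nat.mul_div_cancel_left _ ht,
    show p - 1 = r + c from by omega]
  ring

theorem padicValNat_partition_sylow (p k i r s : ℕ) (hp : p.Prime) (hk : 1 ≤ k)
    (hi0 : 0 < i) (hi1 : i < p ^ k) (hs : s < p ^ (k - 1)) (hirs : i = p ^ (k - 1) * r + s) :
    padicValNat p ((Nat.factorial (p ^ (k - 1))) ^ (p - 1) * Nat.factorial s *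
        Nat.factorial (p ^ (k - 1) - s)) =
      padicValNat p (Nat.factorial i * Nat.factorial (p ^ k - i)) := by
  haveI : Fact p.Prime := ⟨hp⟩
  have hp1 : 1 < p := hp.one_lt
  set q := p ^ (k - 1) with hq
  have hpk : p ^ k = p * q := by
    rw [hq, ← pow_succ']
    congr 1
    omega
  have hqk : q < p ^ k := by
    rw [hpk]
    calc q = 1 * q := (one_mul q).symm
    _ < p * q := by
      exact (Nat.mul_lt_mul_right (by positivity)).mpr hp1
  have hr : r < p := by
    by_contra h
    push_neg at h
    have : p * q ≤ q * r := Nat.mul_le_mul_left q h |>.trans_eq' (by ring)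
    omega
  -- log bounds
  have hlog : ∀ n : ℕ, n < p ^ k → Nat.log p n < k := by
    intro n hn
    rcases Nat.eq_zero_or_pos n with h0 | h0
    · simp only [h0, Nat.log_zero_right]; omega
    · exact Nat.log_lt_of_lt_pow h0.ne' hn
  have hql : Nat.log p q < k := hlog q hqk
  have hsl : Nat.log p s < k := hlog s (hs.trans hqk)
  have hqsl : Nat.log p (q - s) < k := hlog _ (lt_of_le_of_lt (Nat.sub_le _ _) hqk)
  have hil : Nat.log p i < k := hlog i hi1
  have hnil : Nat.log p (p ^ k - i) < k := hlog _ (Nat.sub_lt (by positivity) hi0)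
  have f0 : ∀ n : ℕ, n.factorial ≠ 0 := fun n => (Nat.factorial_pos n).ne'
  rw [padicValNat.mul (mul_ne_zero (pow_ne_zero _ (f0 _)) (f0 _)) (f0 _),
    padicValNat.mul (pow_ne_zero _ (f0 _)) (f0 _),
    padicValNat.pow _ _,
    padicValNat.mul (f0 _) (f0 _),
    padicValNat_factorial (p := p) hql, padicValNat_factorial (p := p) hsl,
    padicValNat_factorial (p := p) hqsl, padicValNat_factorial (p := p) hil,
    padicValNat_factorial (p := p) hnil,
    Finset.mul_sum, ← Finset.sum_add_distrib, ← Finset.sum_add_distrib,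
    ← Finset.sum_add_distrib]
  apply Finset.sum_congr rfl
  intro j hj
  simp only [Finset.mem_Ico] at hj
  have ht : 0 < p ^ j := by positivity
  have hqm : q = p ^ j * p ^ (k - 1 - j) := by
    rw [hq, ← pow_add]
    congr 1
    omega
  have hsle : s ≤ p ^ j * p ^ (k - 1 - j) := by rw [← hqm]; exact hs.le
  have := term_eq_aux p r s (p ^ (k - 1 - j)) (p ^ j) ht hr hsle
  rw [hqm, hirs, hpk, hqm]
  convert this using 3 <;> ring
end
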